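/- Fix any identification type (torus, Klein bottle, or projective plane). Let z be a cell of IMC, let V_z denote the copy of V_m containing z, and let 𝒱 be the set of all copies of V_m in IMC that share a corner vertex with V_z. Then #𝒱 ≤ 45. -/

import Mathlib

/-!
Magic carpets (Sierpinski carpet with torus / Klein bottle / projective plane
identifications of the sides of the vacant squares), following
"Analysis on the projective octagasket and other fractafolds" setup of the paper
"Magic carpets" (Goodman–Siu–Strichartz et al.).

Cells of the infinite blowup are indexed by their lower-left corners in `ℤ × ℤ`
(in units where every cell is a unit square).  A lattice square is a cell iff no
base-3 digit position carries the digit `1` in both coordinates simultaneously.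
The vacant square ("hole") of level `s` at block `(a, b)` is the middle ninth of
the level-`(s+1)` block with block coordinates `(a, b)`, i.e. the square
`[a·3^(s+1)+3^s, a·3^(s+1)+2·3^s) × [b·3^(s+1)+3^s, b·3^(s+1)+2·3^s)`; it is a
genuine vacant square of the carpet iff `(a,b)` itself satisfies the cell
condition.  Opposite sides of each vacant square are identified according to the
chosen identification type; orientation-reversal of a pair of sides reverses the
transverse coordinate.
-/

namespace MagicCarpet

/-- The three ways of identifying the two pairs of opposite sides of a vacant square:
torus (both pairs orientation preserved), Klein bottle (one pair preserved, one
reversed) and projective plane (both pairs reversed). -/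
inductive IdentType
  | torus
  | klein
  | proj
  deriving DecidableEq

/-- Whether crossing a vacant square horizontally (through its vertical pair of sides)
reverses the transverse (vertical) coordinate. -/
def flipH : IdentType → Bool
  | .torus => false
  | .klein => false
  | .proj => true

/-- Whether crossing a vacant square vertically (through its horizontal pair of sides)
reverses the transverse (horizontal) coordinate. -/
def flipV : IdentType → Bool
  | .torus => false
  | .klein => true
  | .proj => true

/-- An assignment of an identification type to every vacant square; the vacant square of
level `s` at block `(a, b)` receives the type `ι s a b`. -/
abbrev IdentAssignment := ℕ → ℤ → ℤ → IdentType

/-- The uniform assignment: the same identification type at every vacant square. -/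
def uniform (t : IdentType) : IdentAssignment := fun _ _ _ => t

/-- The base-3 digit of an integer at position `k` (floor division, so digits of
negative integers are eventually `2`). -/
def dig (k : ℕ) (n : ℤ) : ℤ := Int.emod (Int.ediv n (3 ^ k)) 3

/-- `p` is (the lower-left corner of) a cell of the infinite blowup of the Sierpinski
carpet iff no base-3 digit position carries the digit `1` in both coordinates. -/
def IsCell (p : ℤ × ℤ) : Prop := ∀ k : ℕ, ¬(dig k p.1 = 1 ∧ dig k p.2 = 1)

/-- The cells of the infinite magic carpet. -/
def Cell : Type := { p : ℤ × ℤ // IsCell p }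

/-- `p` and `q` are glued across the vacant square of level `s` at block `(a, b)`
horizontally: `p` is the cell immediately to the left of the vacant square, `q` the
corresponding cell immediately to its right (with the transverse coordinate reversed
when the identification of that pair of sides is orientation reversing). -/
def HoleAdjH (ι : IdentAssignment) (p q : ℤ × ℤ) : Prop :=
  ∃ (s : ℕ) (a b : ℤ), IsCell (a, b) ∧
    p.1 = a * 3 ^ (s + 1) + 3 ^ s - 1 ∧
    q.1 = a * 3 ^ (s + 1) + 2 * 3 ^ s ∧
    b * 3 ^ (s + 1) + 3 ^ s ≤ p.2 ∧ p.2 < b * 3 ^ (s + 1) + 2 * 3 ^ s ∧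
    q.2 = if flipH (ι s a b) then 2 * (b * 3 ^ (s + 1) + 3 ^ s) + 3 ^ s - 1 - p.2 else p.2

/-- Vertical analogue of `HoleAdjH`: `p` is immediately below the vacant square and `q`
immediately above it. -/
def HoleAdjV (ι : IdentAssignment) (p q : ℤ × ℤ) : Prop :=
  ∃ (s : ℕ) (a b : ℤ), IsCell (a, b) ∧
    p.2 = b * 3 ^ (s + 1) + 3 ^ s - 1 ∧
    q.2 = b * 3 ^ (s + 1) + 2 * 3 ^ s ∧
    a * 3 ^ (s + 1) + 3 ^ s ≤ p.1 ∧ p.1 < a * 3 ^ (s + 1) + 2 * 3 ^ s ∧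
    q.1 = if flipV (ι s a b) then 2 * (a * 3 ^ (s + 1) + 3 ^ s) + 3 ^ s - 1 - p.1 else p.1

/-- Two cells of the infinite magic carpet are adjacent iff they share an edge after
identification: either they share an edge in the plane, or they are glued together
across some vacant square. -/
def IMCAdj (ι : IdentAssignment) (p q : ℤ × ℤ) : Prop :=
  IsCell p ∧ IsCell q ∧ p ≠ q ∧
    (|p.1 - q.1| + |p.2 - q.2| = 1 ∨
      HoleAdjH ι p q ∨ HoleAdjH ι q p ∨ HoleAdjV ι p q ∨ HoleAdjV ι q p)

/-- The infinite magic carpet graph `IMC` determined by the identification assignment `ι`: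
vertices are the cells, two cells being adjacent exactly when they share an edge after
identification. -/
def IMC (ι : IdentAssignment) : SimpleGraph Cell where
  Adj p q := IMCAdj ι p.val q.val
  symm := by
    constructor
    rintro p q ⟨hp, hq, hne, hd⟩
    refine ⟨hq, hp, hne.symm, ?_⟩
    rcases hd with h | h | h | h | h
    · left
      rw [abs_sub_comm q.val.1 p.val.1, abs_sub_comm q.val.2 p.val.2]
      exact h
    · exact Or.inr (Or.inr (Or.inl h))
    · exact Or.inr (Or.inl h)
    · exact Or.inr (Or.inr (Or.inr (Or.inr h)))
    · exact Or.inr (Or.inr (Or.inr (Or.inl h)))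
  loopless := by
    constructor
    rintro p ⟨_, _, hne, _⟩
    exact hne rfl

/-- The ball `B(x, r)` of radius `r` around the cell `x`, in the geodesic graph metric
(the distance between two cells is the length of a shortest path of successively
adjacent cells joining them). -/
def ball (ι : IdentAssignment) (x : Cell) (r : ℕ) : Set Cell :=
  { y | (IMC ι).dist x y < r }

/-- The block coordinates of the copy of `V_m` containing the cell `p`. -/
def copyOf (m : ℕ) (p : Cell) : ℤ × ℤ :=
  (Int.ediv p.val.1 (3 ^ m), Int.ediv p.val.2 (3 ^ m))

/-- The cell `p` belongs to the copy of `V_m` with block coordinates `C`. -/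
def InCopy (m : ℕ) (C : ℤ × ℤ) (p : Cell) : Prop := copyOf m p = C

/-- The `3^m × 3^m` block with block coordinates `C` is a copy of `V_m` inside the
infinite magic carpet. -/
def IsCopy (C : ℤ × ℤ) : Prop := IsCell C

/-- `p` is one of the four corner cells of the copy of `V_m` at block `C`. -/
def IsCornerCell (m : ℕ) (C : ℤ × ℤ) (p : Cell) : Prop :=
  InCopy m C p ∧
    (p.val.1 = C.1 * 3 ^ m ∨ p.val.1 = (C.1 + 1) * 3 ^ m - 1) ∧
    (p.val.2 = C.2 * 3 ^ m ∨ p.val.2 = (C.2 + 1) * 3 ^ m - 1)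

/-- The sequence `R` with `R 0 = 0` and `R (m+1) = max (2·R m + 3) (2·R m + 2^m + 1)`. -/
def R : ℕ → ℕ
  | 0 => 0
  | m + 1 => max (2 * R m + 3) (2 * R m + 2 ^ m + 1)

/-- The four sides of a square block (or of a rectangular stack of blocks). -/
inductive Side
  | left
  | right
  | bottom
  | top
  deriving DecidableEq

/-- The opposite side. -/
def Side.opp : Side → Side
  | .left => .right
  | .right => .left
  | .bottom => .top
  | .top => .bottom

/-- The cell `p` lies in the copy of `V_m` at block `C`, along its side `d` (so one of the
edges of `p` lies on the corresponding `m`-edge of that copy). -/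
def OnSide (m : ℕ) (C : ℤ × ℤ) (d : Side) (p : Cell) : Prop :=
  InCopy m C p ∧
    match d with
    | .left => p.val.1 = C.1 * 3 ^ m
    | .right => p.val.1 = (C.1 + 1) * 3 ^ m - 1
    | .bottom => p.val.2 = C.2 * 3 ^ m
    | .top => p.val.2 = (C.2 + 1) * 3 ^ m - 1

/-- The column of cells with first coordinate `c` hits (has a cell whose edge lies on the
boundary of) the vacant square of level `s` whose horizontal block coordinate is `a`. -/
def ColumnHitsStitch (s : ℕ) (a : ℤ) (c : ℤ) : Prop :=
  a * 3 ^ (s + 1) + 3 ^ s - 1 ≤ c ∧ c ≤ a * 3 ^ (s + 1) + 2 * 3 ^ s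

/-- The vacant square of level `s` at block `(a, b)` lies in the interior of the copy of
`V_m` at block `C`. -/
def HoleInsideCopy (m : ℕ) (C : ℤ × ℤ) (s : ℕ) (a b : ℤ) : Prop :=
  C.1 * 3 ^ m ≤ a * 3 ^ (s + 1) ∧ (a + 1) * 3 ^ (s + 1) ≤ (C.1 + 1) * 3 ^ m ∧
  C.2 * 3 ^ m ≤ b * 3 ^ (s + 1) ∧ (b + 1) * 3 ^ (s + 1) ≤ (C.2 + 1) * 3 ^ m

/-- The copy of `V_m` at block `W` is glued just above the copy at block `V` (they are
vertical neighbours, intersecting along a horizontal `m`-edge): either the blocks are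
adjacent in the plane, or the top side of `V` and the bottom side of `W` are identified
sides of a vacant square of level `≥ m`.  The flag `f` records whether this gluing
reverses the horizontal coordinate. -/
def GluedVert (ι : IdentAssignment) (m : ℕ) (V W : ℤ × ℤ) (f : Bool) : Prop :=
  IsCell V ∧ IsCell W ∧
    ((W.1 = V.1 ∧ W.2 = V.2 + 1 ∧ f = false) ∨
      ∃ (s : ℕ) (a b : ℤ), m ≤ s ∧ IsCell (a, b) ∧
        (V.2 + 1) * 3 ^ m = b * 3 ^ (s + 1) + 3 ^ s ∧
        W.2 * 3 ^ m = b * 3 ^ (s + 1) + 2 * 3 ^ s ∧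
        a * 3 ^ (s + 1) + 3 ^ s ≤ V.1 * 3 ^ m ∧
        (V.1 + 1) * 3 ^ m ≤ a * 3 ^ (s + 1) + 2 * 3 ^ s ∧
        f = flipV (ι s a b) ∧
        (if f then W.1 * 3 ^ m = 2 * (a * 3 ^ (s + 1) + 3 ^ s) + 3 ^ s - (V.1 + 1) * 3 ^ m
          else W.1 = V.1))

/-- Horizontal analogue of `GluedVert`: `W` is glued just to the right of `V` (they are
horizontal neighbours, intersecting along a vertical `m`-edge). -/
def GluedHoriz (ι : IdentAssignment) (m : ℕ) (V W : ℤ × ℤ) (f : Bool) : Prop :=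
  IsCell V ∧ IsCell W ∧
    ((W.2 = V.2 ∧ W.1 = V.1 + 1 ∧ f = false) ∨
      ∃ (s : ℕ) (a b : ℤ), m ≤ s ∧ IsCell (a, b) ∧
        (V.1 + 1) * 3 ^ m = a * 3 ^ (s + 1) + 3 ^ s ∧
        W.1 * 3 ^ m = a * 3 ^ (s + 1) + 2 * 3 ^ s ∧
        b * 3 ^ (s + 1) + 3 ^ s ≤ V.2 * 3 ^ m ∧
        (V.2 + 1) * 3 ^ m ≤ b * 3 ^ (s + 1) + 2 * 3 ^ s ∧
        f = flipH (ι s a b) ∧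
        (if f then W.2 * 3 ^ m = 2 * (b * 3 ^ (s + 1) + 3 ^ s) + 3 ^ s - (V.2 + 1) * 3 ^ m
          else W.2 = V.2))

/-- An `m`-stack: a finite sequence of copies of `V_m`, consecutive copies being all
horizontal neighbours or all vertical neighbours.  Each copy carries a Boolean flag
recording its orientation relative to the first copy (so that the stack is isomorphic,
as a cell graph, to a rectangular stack of copies of `V_m`). -/
structure MStack (ι : IdentAssignment) (m : ℕ) where
  vert : Bool
  blocks : List ((ℤ × ℤ) × Bool)
  nonempty : blocks ≠ []
  copies : ∀ Bf ∈ blocks, IsCell Bf.1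
  head_flip : (blocks.head nonempty).2 = false
  chain : blocks.Chain' fun Vf Wf => ∃ g : Bool,
    (if vert then GluedVert ι m Vf.1 Wf.1 g else GluedHoriz ι m Vf.1 Wf.1 g) ∧
      Wf.2 = xor Vf.2 g

/-- The cell `p` lies in (one of the copies of `V_m` constituting) the `m`-stack `st`. -/
def MStack.MemCell {ι : IdentAssignment} {m : ℕ} (st : MStack ι m) (p : Cell) : Prop :=
  ∃ Bf ∈ st.blocks, copyOf m p = Bf.1

/-- The side `d` of the `3^m × 3^m` block `B`, as a set of points of the plane. -/
def blockSideSet (m : ℕ) (B : ℤ × ℤ) (d : Side) : Set (ℤ × ℤ) :=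
  match d with
  | .left => { p | p.1 = B.1 * 3 ^ m ∧ B.2 * 3 ^ m ≤ p.2 ∧ p.2 ≤ (B.2 + 1) * 3 ^ m }
  | .right => { p | p.1 = (B.1 + 1) * 3 ^ m ∧ B.2 * 3 ^ m ≤ p.2 ∧ p.2 ≤ (B.2 + 1) * 3 ^ m }
  | .bottom => { p | p.2 = B.2 * 3 ^ m ∧ B.1 * 3 ^ m ≤ p.1 ∧ p.1 ≤ (B.1 + 1) * 3 ^ m }
  | .top => { p | p.2 = (B.2 + 1) * 3 ^ m ∧ B.1 * 3 ^ m ≤ p.1 ∧ p.1 ≤ (B.1 + 1) * 3 ^ m }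

/-- The side `d` of the rectangular outer boundary of the `m`-stack `st`, as a set of
points of the plane (taking the recorded orientation flips into account). -/
def MStack.sideSet {ι : IdentAssignment} {m : ℕ} (st : MStack ι m) (d : Side) :
    Set (ℤ × ℤ) :=
  if st.vert then
    (match d with
    | .bottom => blockSideSet m (st.blocks.head st.nonempty).1 .bottom
    | .top => blockSideSet m (st.blocks.getLast st.nonempty).1 .top
    | .left =>
        { p | ∃ Bf ∈ st.blocks, p ∈ blockSideSet m Bf.1 (if Bf.2 then Side.right else Side.left) }
    | .right =>
        { p | ∃ Bf ∈ st.blocks, p ∈ blockSideSet m Bf.1 (if Bf.2 then Side.left else Side.right) })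
  else
    (match d with
    | .left => blockSideSet m (st.blocks.head st.nonempty).1 .left
    | .right => blockSideSet m (st.blocks.getLast st.nonempty).1 .right
    | .bottom =>
        { p | ∃ Bf ∈ st.blocks, p ∈ blockSideSet m Bf.1 (if Bf.2 then Side.top else Side.bottom) }
    | .top =>
        { p | ∃ Bf ∈ st.blocks, p ∈ blockSideSet m Bf.1 (if Bf.2 then Side.bottom else Side.top) })

/-- The side `d` of the unit cell with lower-left corner `c`, as a set of points. -/
def cellEdge (c : ℤ × ℤ) (d : Side) : Set (ℤ × ℤ) :=
  match d with
  | .left => { p | p.1 = c.1 ∧ c.2 ≤ p.2 ∧ p.2 ≤ c.2 + 1 }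
  | .right => { p | p.1 = c.1 + 1 ∧ c.2 ≤ p.2 ∧ p.2 ≤ c.2 + 1 }
  | .bottom => { p | p.2 = c.2 ∧ c.1 ≤ p.1 ∧ p.1 ≤ c.1 + 1 }
  | .top => { p | p.2 = c.2 + 1 ∧ c.1 ≤ p.1 ∧ p.1 ≤ c.1 + 1 }

/-- The cell `c` is on the set `S` (one of its four edges is contained in `S`). -/
def CellOnSet (c : Cell) (S : Set (ℤ × ℤ)) : Prop :=
  ∃ d : Side, cellEdge c.val d ⊆ S

/-- An axis-parallel segment of length `3^m` with `3^m`-aligned endpoints: if `vert` it is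
`{a·3^m} × [b·3^m, (b+1)·3^m]`, otherwise `[a·3^m, (a+1)·3^m] × {b·3^m}`.  (The `m`-edges
of the infinite magic carpet are such segments, taken up to identification.) -/
structure Seg where
  vert : Bool
  a : ℤ
  b : ℤ

/-- The set of points of the segment `e` (at scale `3^m`). -/
def Seg.pts (m : ℕ) (e : Seg) : Set (ℤ × ℤ) :=
  if e.vert then { p | p.1 = e.a * 3 ^ m ∧ e.b * 3 ^ m ≤ p.2 ∧ p.2 ≤ (e.b + 1) * 3 ^ m }
  else { p | p.2 = e.b * 3 ^ m ∧ e.a * 3 ^ m ≤ p.1 ∧ p.1 ≤ (e.a + 1) * 3 ^ m }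

/-- The segments `e` (on the left or bottom side of a vacant square of level `≥ m`) and
`e'` (the corresponding subsegment of the opposite side of that vacant square) are glued
by the identification of the sides of that vacant square. -/
def SegGlue (ι : IdentAssignment) (m : ℕ) (e e' : Seg) : Prop :=
  ∃ (s : ℕ) (a b : ℤ), m ≤ s ∧ IsCell (a, b) ∧
    ((e.vert = true ∧ e'.vert = true ∧
        e.a * 3 ^ m = a * 3 ^ (s + 1) + 3 ^ s ∧
        e'.a * 3 ^ m = a * 3 ^ (s + 1) + 2 * 3 ^ s ∧
        b * 3 ^ (s + 1) + 3 ^ s ≤ e.b * 3 ^ m ∧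
        (e.b + 1) * 3 ^ m ≤ b * 3 ^ (s + 1) + 2 * 3 ^ s ∧
        (if flipH (ι s a b) then
          e'.b * 3 ^ m = 2 * (b * 3 ^ (s + 1) + 3 ^ s) + 3 ^ s - (e.b + 1) * 3 ^ m
         else e'.b = e.b)) ∨
      (e.vert = false ∧ e'.vert = false ∧
        e.b * 3 ^ m = b * 3 ^ (s + 1) + 3 ^ s ∧
        e'.b * 3 ^ m = b * 3 ^ (s + 1) + 2 * 3 ^ s ∧
        a * 3 ^ (s + 1) + 3 ^ s ≤ e.a * 3 ^ m ∧
        (e.a + 1) * 3 ^ m ≤ a * 3 ^ (s + 1) + 2 * 3 ^ s ∧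
        (if flipV (ι s a b) then
          e'.a * 3 ^ m = 2 * (a * 3 ^ (s + 1) + 3 ^ s) + 3 ^ s - (e.a + 1) * 3 ^ m
         else e'.a = e.a)))

/-- Two segments represent the same `m`-edge of the infinite magic carpet iff they are
related by the equivalence generated by the gluings of the sides of the vacant squares. -/
def SegEquiv (ι : IdentAssignment) (m : ℕ) : Seg → Seg → Prop :=
  Relation.EqvGen fun e e' => SegGlue ι m e e' ∨ SegGlue ι m e' e

/-- The lattice points `p` (on the left or bottom side of a vacant square) and `q` (the
corresponding point of the opposite side) are glued by the identification of the sides of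
that vacant square. -/
def PtGlue (ι : IdentAssignment) (p q : ℤ × ℤ) : Prop :=
  ∃ (s : ℕ) (a b : ℤ), IsCell (a, b) ∧
    ((p.1 = a * 3 ^ (s + 1) + 3 ^ s ∧ q.1 = a * 3 ^ (s + 1) + 2 * 3 ^ s ∧
        b * 3 ^ (s + 1) + 3 ^ s ≤ p.2 ∧ p.2 ≤ b * 3 ^ (s + 1) + 2 * 3 ^ s ∧
        q.2 = if flipH (ι s a b) then 2 * (b * 3 ^ (s + 1) + 3 ^ s) + 3 ^ s - p.2 else p.2) ∨
      (p.2 = b * 3 ^ (s + 1) + 3 ^ s ∧ q.2 = b * 3 ^ (s + 1) + 2 * 3 ^ s ∧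
        a * 3 ^ (s + 1) + 3 ^ s ≤ p.1 ∧ p.1 ≤ a * 3 ^ (s + 1) + 2 * 3 ^ s ∧
        q.1 = if flipV (ι s a b) then 2 * (a * 3 ^ (s + 1) + 3 ^ s) + 3 ^ s - p.1 else p.1))

/-- Two lattice points represent the same vertex of the infinite magic carpet iff they
are related by the equivalence generated by the gluings of the sides of the vacant
squares. -/
def PtEquiv (ι : IdentAssignment) : ℤ × ℤ → ℤ × ℤ → Prop :=
  Relation.EqvGen fun p q => PtGlue ι p q ∨ PtGlue ι q p

/-- The segment forming the side `d` of the `3^m × 3^m` block `B`. -/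
def BlockSide (m : ℕ) (B : ℤ × ℤ) (d : Side) : Seg :=
  match d with
  | .left => ⟨true, B.1, B.2⟩
  | .right => ⟨true, B.1 + 1, B.2⟩
  | .bottom => ⟨false, B.1, B.2⟩
  | .top => ⟨false, B.1, B.2 + 1⟩

/-- The segment `e` represents the `m`-edge `E_{V,W}` along which the two distinct copies
`V` and `W` of `V_m` intersect after identification. -/
def IsEdgeBetween (ι : IdentAssignment) (m : ℕ) (V W : ℤ × ℤ) (e : Seg) : Prop :=
  V ≠ W ∧ IsCell V ∧ IsCell W ∧
    ∃ d d' : Side, SegEquiv ι m e (BlockSide m V d) ∧ SegEquiv ι m e (BlockSide m W d')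

/-- The `m`-edges represented by `e` and `e'` intersect (after identification). -/
def SegIntersect (ι : IdentAssignment) (m : ℕ) (e e' : Seg) : Prop :=
  ∃ (e₁ e₂ : Seg) (p q : ℤ × ℤ), SegEquiv ι m e e₁ ∧ SegEquiv ι m e' e₂ ∧
    p ∈ e₁.pts m ∧ q ∈ e₂.pts m ∧ PtEquiv ι p q

/-- The cell `c` is on the `m`-edge represented by `e` (one of its edges lies on the
`m`-edge, after identification). -/
def CellOnSeg (ι : IdentAssignment) (m : ℕ) (e : Seg) (c : Cell) : Prop :=
  ∃ e' : Seg, SegEquiv ι m e e' ∧ CellOnSet c (Seg.pts m e')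

/-- The `m`-edge represented by `e` lies (after identification) inside the point set `S`. -/
def SegOnSet (ι : IdentAssignment) (m : ℕ) (e : Seg) (S : Set (ℤ × ℤ)) : Prop :=
  ∃ e' : Seg, SegEquiv ι m e e' ∧ Seg.pts m e' ⊆ S

/-- The point `p` lies (after identification) on the `m`-edge represented by `e`. -/
def PtOnSeg (ι : IdentAssignment) (m : ℕ) (e : Seg) (p : ℤ × ℤ) : Prop :=
  ∃ (e' : Seg) (q : ℤ × ℤ), SegEquiv ι m e e' ∧ q ∈ Seg.pts m e' ∧ PtEquiv ι p q

/-- The `m`-sequence of a path: the copies of `V_m` containing its successive cells, with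
consecutive repetitions deleted. -/
def mSeq (ι : IdentAssignment) (m : ℕ) {x y : Cell} (w : (IMC ι).Walk x y) :
    List (ℤ × ℤ) :=
  (w.support.map (copyOf m)).destutter (· ≠ ·)

/-- `(i, V, W)` is an `m`-segment-of-two of the list `L`: `V` is the `i`-th entry of `L`,
`W` the `(i+1)`-st, and neither `V` nor `W` is the `(i-1)`-st entry (if it exists). -/
def IsSegTwo (L : List (ℤ × ℤ)) (i : ℕ) (V W : ℤ × ℤ) : Prop :=
  L[i]? = some V ∧ L[i + 1]? = some W ∧
    (i = 0 ∨ ∀ U, L[i - 1]? = some U → U ≠ V ∧ U ≠ W)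

/-- The path `w` enters the `m`-segment-of-two with copies `V, W` through the `m`-edge
represented by `e`: it has consecutive cells, both on that `m`-edge, of which only the
second lies in `V` or `W`. -/
def EntersThrough (ι : IdentAssignment) (m : ℕ) {x y : Cell} (w : (IMC ι).Walk x y)
    (V W : ℤ × ℤ) (e : Seg) : Prop :=
  ∃ (n : ℕ) (c c' : Cell), w.support[n]? = some c ∧ w.support[n + 1]? = some c' ∧
    CellOnSeg ι m e c ∧ CellOnSeg ι m e c' ∧
    copyOf m c ≠ V ∧ copyOf m c ≠ W ∧ (copyOf m c' = V ∨ copyOf m c' = W)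

/-- The path `w` exits the `m`-segment-of-two with copies `V, W` through the `m`-edge
represented by `e`: it has consecutive cells, both on that `m`-edge, of which only the
first lies in `V` or `W`. -/
def ExitsThrough (ι : IdentAssignment) (m : ℕ) {x y : Cell} (w : (IMC ι).Walk x y)
    (V W : ℤ × ℤ) (e : Seg) : Prop :=
  ∃ (n : ℕ) (c c' : Cell), w.support[n]? = some c ∧ w.support[n + 1]? = some c' ∧
    CellOnSeg ι m e c ∧ CellOnSeg ι m e c' ∧
    (copyOf m c = V ∨ copyOf m c = W) ∧ copyOf m c' ≠ V ∧ copyOf m c' ≠ W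

/-- `p` is the center of the `m`-segment-of-two `(i, V, W)` of the path `w`: the vertex at
which `E_{V,W}` and those of `Ent(i)`, `Exit(i)` that exist all intersect. -/
def IsCenter (ι : IdentAssignment) (m : ℕ) {x y : Cell} (w : (IMC ι).Walk x y) (i : ℕ)
    (V W : ℤ × ℤ) (p : ℤ × ℤ) : Prop :=
  IsSegTwo (mSeq ι m w) i V W ∧
    (∃ e : Seg, EntersThrough ι m w V W e ∨ ExitsThrough ι m w V W e) ∧
    (∃ evw : Seg, IsEdgeBetween ι m V W evw ∧ PtOnSeg ι m evw p) ∧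
    (∀ e : Seg, EntersThrough ι m w V W e → PtOnSeg ι m e p) ∧
    (∀ e : Seg, ExitsThrough ι m w V W e → PtOnSeg ι m e p)

/-- `p` is one of the four corner points of the copy of `V_m` at block `C`. -/
def IsCornerPt (m : ℕ) (C : ℤ × ℤ) (p : ℤ × ℤ) : Prop :=
  (p.1 = C.1 * 3 ^ m ∨ p.1 = (C.1 + 1) * 3 ^ m) ∧
  (p.2 = C.2 * 3 ^ m ∨ p.2 = (C.2 + 1) * 3 ^ m)

/-- The copies of `V_m` at blocks `C` and `D` share a corner vertex (after
identification). -/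
def SharesCornerVertex (ι : IdentAssignment) (m : ℕ) (C D : ℤ × ℤ) : Prop :=
  ∃ p q : ℤ × ℤ, IsCornerPt m C p ∧ IsCornerPt m D q ∧ PtEquiv ι p q

/-- Reduction of cell coordinates modulo the period lattice `3^m · ℤ²`. -/
def redMod (m : ℕ) (p : ℤ × ℤ) : ℤ × ℤ := (Int.emod p.1 (3 ^ m), Int.emod p.2 (3 ^ m))

/-- `p` lies in the fundamental domain `[0, 3^m) × [0, 3^m)`. -/
def InFund (m : ℕ) (p : ℤ × ℤ) : Prop := 0 ≤ p.1 ∧ p.1 < 3 ^ m ∧ 0 ≤ p.2 ∧ p.2 < 3 ^ m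

/-- Adjacency across the outer boundary of `MCT_m` (opposite sides of the outer square
identified with orientation preserved). -/
def WrapAdj (m : ℕ) (p q : ℤ × ℤ) : Prop :=
  (p.1 = 3 ^ m - 1 ∧ q.1 = 0 ∧ q.2 = p.2) ∨ (p.2 = 3 ^ m - 1 ∧ q.2 = 0 ∧ q.1 = p.1)

/-- The cell graph of `MCT_m`, the level-`m` magic carpet with torus identifications of
all inner vacant squares and of the outer boundary, on the cells of the fundamental
domain. -/
def MCTAdj (m : ℕ) (p q : ℤ × ℤ) : Prop :=
  InFund m p ∧ InFund m q ∧ IsCell p ∧ IsCell q ∧ p ≠ q ∧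
    (|p.1 - q.1| + |p.2 - q.2| = 1 ∨
      HoleAdjH (uniform .torus) p q ∨ HoleAdjH (uniform .torus) q p ∨
      HoleAdjV (uniform .torus) p q ∨ HoleAdjV (uniform .torus) q p ∨
      WrapAdj m p q ∨ WrapAdj m q p)

/-!
The copies of `V_m` having a corner identified with a given lattice point `p` are among the
at most four blocks around each point of the identification class of `p`. That class is small:
a point lies on the vertical sides of at most one vacant square and on the horizontal sides of
at most one, and if it lies on both kinds they belong to the same square, of which it is a corner.
So the class is either contained in a pair of points or in the four corners of one vacant
square. In the second case the square has level at least `m` (as `p` is a corner of a block of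
side `3^m`), so at each of its corners one of the four surrounding blocks lies inside the vacant
square and is not a copy. Either way at most `12` copies share a given corner with `V_z`, one
of them `V_z` itself, whence at most `1 + 4 · 11 = 45` copies in all.
-/

open Finset

lemma exists_mul_pow_eq_three_mul {s s' : ℕ} (hs : s < s') (c : ℤ) :
    ∃ M : ℤ, c * 3 ^ s' = 3 * M * 3 ^ s := by
  obtain ⟨k, rfl⟩ := Nat.exists_eq_add_of_lt hs
  exact ⟨c * 3 ^ k, by ring⟩

lemma three_dvd_of_mul_pow_eq {s s' : ℕ} {u c : ℤ} (hs : s < s')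
    (h : u * 3 ^ s = c * 3 ^ s') : (3 : ℤ) ∣ u := by
  obtain ⟨M, hM⟩ := exists_mul_pow_eq_three_mul hs c
  exact ⟨M, mul_right_cancel₀ (by positivity) (h.trans hM)⟩

lemma card_biUnion_le_of_common_mem {ι α : Type*} [DecidableEq α] (s : Finset ι)
    (F : ι → Finset α) {c : α} {n : ℕ} (hc : ∀ i ∈ s, c ∈ F i)
    (hF : ∀ i ∈ s, (F i).card ≤ n + 1) : (s.biUnion F).card ≤ s.card * n + 1 := by
  have hsub : s.biUnion F ⊆ insert c (s.biUnion fun i => (F i).erase c) := by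
    intro x hx
    obtain ⟨i, hi, hxi⟩ := mem_biUnion.1 hx
    by_cases hxc : x = c
    · exact hxc ▸ mem_insert_self _ _
    · exact mem_insert_of_mem (mem_biUnion.2 ⟨i, hi, mem_erase.2 ⟨hxc, hxi⟩⟩)
  calc (s.biUnion F).card ≤ (s.biUnion fun i => (F i).erase c).card + 1 :=
        (card_le_card hsub).trans (card_insert_le _ _)
    _ ≤ s.card * n + 1 := by
        gcongr
        refine card_biUnion_le_card_mul _ _ _ fun i hi => ?_
        have := hF i hi
        rw [card_erase_of_mem (hc i hi)]
        omega

lemma card_pair_product_pair_le {α β : Type*} [DecidableEq α] [DecidableEq β] {a a' : α}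
    {b b' : β} : (({a, a'} : Finset α) ×ˢ ({b, b'} : Finset β)).card ≤ 4 := by
  rw [card_product]
  exact Nat.mul_le_mul card_le_two card_le_two

lemma isCell_copyOf (m : ℕ) (z : Cell) : IsCell (copyOf m z) := by
  have hdig : ∀ k x, dig k (Int.ediv x (3 ^ m)) = dig (k + m) x := fun k x => by
    change x / 3 ^ m / 3 ^ k % 3 = x / 3 ^ (k + m) % 3
    rw [Int.ediv_ediv_of_nonneg (by positivity), ← pow_add, add_comm]
  intro k hk
  exact z.2 (k + m) ⟨hdig k _ ▸ hk.1, hdig k _ ▸ hk.2⟩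

/- The vacant square of level `s` at block `(a, b)` is
`[(3a+1)·3^s, (3a+2)·3^s] × [(3b+1)·3^s, (3b+2)·3^s]`: the product of the middle thirds of two
triadic intervals of length `3^(s+1)`. -/

section MiddleThird

def midEnds (s : ℕ) (a : ℤ) : Finset ℤ := {(3 * a + 1) * 3 ^ s, (3 * a + 2) * 3 ^ s}

def InMid (s : ℕ) (a x : ℤ) : Prop := (3 * a + 1) * 3 ^ s ≤ x ∧ x ≤ (3 * a + 2) * 3 ^ s

def midReflect (s : ℕ) (a x : ℤ) : ℤ := (6 * a + 3) * 3 ^ s - x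

variable {s s' m : ℕ} {a a' x : ℤ}

lemma mem_midEnds : x ∈ midEnds s a ↔ x = (3 * a + 1) * 3 ^ s ∨ x = (3 * a + 2) * 3 ^ s := by
  simp [midEnds]

lemma InMid.of_mem_midEnds (h : x ∈ midEnds s a) : InMid s a x := by
  have := pow_pos (three_pos : (0 : ℤ) < 3) s
  rcases mem_midEnds.1 h with rfl | rfl <;> constructor <;> nlinarith

lemma midReflect_midReflect : midReflect s a (midReflect s a x) = x := by
  simp [midReflect]

lemma midReflect_mem_midEnds (h : x ∈ midEnds s a) : midReflect s a x ∈ midEnds s a := by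
  rw [mem_midEnds] at h ⊢
  rcases h with rfl | rfl
  · exact Or.inr (by unfold midReflect; ring)
  · exact Or.inl (by unfold midReflect; ring)

lemma InMid.midReflect (h : InMid s a x) : InMid s a (midReflect s a x) := by
  unfold InMid MagicCarpet.midReflect at *
  constructor <;> linarith [h.1, h.2]

lemma InMid.unique (h : InMid s a x) (h' : InMid s a' x) : a = a' := by
  have hpos := pow_pos (three_pos : (0 : ℤ) < 3) s
  have h₁ := le_of_mul_le_mul_right (h.1.trans h'.2) hpos
  have h₂ := le_of_mul_le_mul_right (h'.1.trans h.2) hpos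
  omega

lemma le_of_mem_midEnds_of_eq_mul_pow {c : ℤ} (h : x ∈ midEnds s a) (hx : x = c * 3 ^ s') :
    s' ≤ s := by
  by_contra! hlt
  rcases mem_midEnds.1 h with rfl | rfl <;>
    have := three_dvd_of_mul_pow_eq hlt hx <;> omega

lemma le_of_mem_midEnds_of_dvd (h : x ∈ midEnds s a) (hdvd : (3 : ℤ) ^ m ∣ x) : m ≤ s := by
  obtain ⟨c, hc⟩ := hdvd
  exact le_of_mem_midEnds_of_eq_mul_pow h (hc.trans (mul_comm _ _))

lemma eq_of_mem_midEnds (h : x ∈ midEnds s a) (h' : x ∈ midEnds s' a') : s = s' ∧ a = a' := by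
  have hs : s = s' := by
    apply le_antisymm
    · rcases mem_midEnds.1 h with rfl | rfl <;> exact le_of_mem_midEnds_of_eq_mul_pow h' rfl
    · rcases mem_midEnds.1 h' with rfl | rfl <;> exact le_of_mem_midEnds_of_eq_mul_pow h rfl
  subst hs
  exact ⟨rfl, (InMid.of_mem_midEnds h).unique (InMid.of_mem_midEnds h')⟩

lemma not_inMid_of_mem_midEnds_of_lt (hs : s < s') (h : x ∈ midEnds s' a') : ¬InMid s a x := by
  rintro ⟨h₁, h₂⟩
  have hpos := pow_pos (three_pos : (0 : ℤ) < 3) s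
  obtain ⟨M, hM⟩ : ∃ M, x = 3 * M * 3 ^ s := by
    rcases mem_midEnds.1 h with rfl | rfl <;> exact exists_mul_pow_eq_three_mul hs _
  rw [hM] at h₁ h₂
  have := le_of_mul_le_mul_right h₁ hpos
  have := le_of_mul_le_mul_right h₂ hpos
  omega

end MiddleThird

section VacantSquare

/- Here `(a, b)` need not be a cell, i.e. the square need not be genuinely vacant; this only
enlarges the sets `crossings` that bound the identification classes below. -/

def OnVertSide (s : ℕ) (a b : ℤ) (p : ℤ × ℤ) : Prop := p.1 ∈ midEnds s a ∧ InMid s b p.2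

def OnHorizSide (s : ℕ) (a b : ℤ) (p : ℤ × ℤ) : Prop := InMid s a p.1 ∧ p.2 ∈ midEnds s b

def holeCorners (s : ℕ) (a b : ℤ) : Finset (ℤ × ℤ) := midEnds s a ×ˢ midEnds s b

def crossH (t : IdentType) (s : ℕ) (a b : ℤ) (p : ℤ × ℤ) : ℤ × ℤ :=
  (midReflect s a p.1, if flipH t then midReflect s b p.2 else p.2)

def crossV (t : IdentType) (s : ℕ) (a b : ℤ) (p : ℤ × ℤ) : ℤ × ℤ :=
  (if flipV t then midReflect s a p.1 else p.1, midReflect s b p.2)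

variable {t : IdentType} {s s' : ℕ} {a b a' b' : ℤ} {p : ℤ × ℤ}

lemma mem_holeCorners_iff : p ∈ holeCorners s a b ↔ OnVertSide s a b p ∧ OnHorizSide s a b p :=
  ⟨fun h => have h := mem_product.1 h
      ⟨⟨h.1, .of_mem_midEnds h.2⟩, ⟨.of_mem_midEnds h.1, h.2⟩⟩,
    fun h => mem_product.2 ⟨h.1.1, h.2.2⟩⟩

lemma card_holeCorners_le : (holeCorners s a b).card ≤ 4 :=
  card_pair_product_pair_le

lemma crossH_crossH : crossH t s a b (crossH t s a b p) = p := by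
  unfold crossH; split_ifs <;> simp [midReflect_midReflect]

lemma crossV_crossV : crossV t s a b (crossV t s a b p) = p := by
  unfold crossV; split_ifs <;> simp [midReflect_midReflect]

lemma crossH_crossV : crossH t s a b (crossV t s a b p) = crossV t s a b (crossH t s a b p) := by
  unfold crossH crossV; split_ifs <;> rfl

lemma OnVertSide.crossH (h : OnVertSide s a b p) : OnVertSide s a b (crossH t s a b p) := by
  refine ⟨midReflect_mem_midEnds h.1, ?_⟩
  unfold MagicCarpet.crossH
  split_ifs
  exacts [h.2.midReflect, h.2]

lemma OnHorizSide.crossV (h : OnHorizSide s a b p) : OnHorizSide s a b (crossV t s a b p) := by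
  refine ⟨?_, midReflect_mem_midEnds h.2⟩
  unfold MagicCarpet.crossV
  split_ifs
  exacts [h.1.midReflect, h.1]

lemma crossH_mem_holeCorners (h : p ∈ holeCorners s a b) :
    crossH t s a b p ∈ holeCorners s a b := by
  rw [holeCorners, mem_product] at h ⊢
  refine ⟨midReflect_mem_midEnds h.1, ?_⟩
  unfold crossH
  split_ifs
  exacts [midReflect_mem_midEnds h.2, h.2]

lemma crossV_mem_holeCorners (h : p ∈ holeCorners s a b) :
    crossV t s a b p ∈ holeCorners s a b := by
  rw [holeCorners, mem_product] at h ⊢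
  refine ⟨?_, midReflect_mem_midEnds h.2⟩
  unfold crossV
  split_ifs
  exacts [midReflect_mem_midEnds h.1, h.1]

lemma OnVertSide.unique (h : OnVertSide s a b p) (h' : OnVertSide s' a' b' p) :
    s = s' ∧ a = a' ∧ b = b' := by
  obtain ⟨rfl, rfl⟩ := eq_of_mem_midEnds h.1 h'.1
  exact ⟨rfl, rfl, h.2.unique h'.2⟩

lemma OnHorizSide.unique (h : OnHorizSide s a b p) (h' : OnHorizSide s' a' b' p) :
    s = s' ∧ a = a' ∧ b = b' := by
  obtain ⟨rfl, rfl⟩ := eq_of_mem_midEnds h.2 h'.2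
  exact ⟨rfl, h.1.unique h'.1, rfl⟩

lemma OnVertSide.unique_onHorizSide (h : OnVertSide s a b p) (h' : OnHorizSide s' a' b' p) :
    s = s' ∧ a = a' ∧ b = b' := by
  obtain rfl : s = s' := by
    rcases lt_trichotomy s s' with hlt | heq | hlt
    · exact absurd h.2 (not_inMid_of_mem_midEnds_of_lt hlt h'.2)
    · exact heq
    · exact absurd h'.1 (not_inMid_of_mem_midEnds_of_lt hlt h.1)
  exact ⟨rfl, (InMid.of_mem_midEnds h.1).unique h'.1, h.2.unique (.of_mem_midEnds h'.2)⟩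

end VacantSquare

section Crossings

variable {t : IdentType} {s : ℕ} {a b : ℤ} {p q : ℤ × ℤ}

def crossings (t : IdentType) (p : ℤ × ℤ) : Set (ℤ × ℤ) :=
  {q | q = p ∨ (∃ s a b, OnVertSide s a b p ∧ q = crossH t s a b p) ∨
    (∃ s a b, OnHorizSide s a b p ∧ q = crossV t s a b p) ∨
    ∃ s a b, p ∈ holeCorners s a b ∧ q = crossV t s a b (crossH t s a b p)}

lemma crossings_subset_crossings_crossH (hp : OnVertSide s a b p) :
    crossings t p ⊆ crossings t (crossH t s a b p) := by
  have hq : OnVertSide s a b (crossH t s a b p) := hp.crossH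
  rintro r (rfl | ⟨s', a', b', h, rfl⟩ | ⟨s', a', b', h, rfl⟩ | ⟨s', a', b', h, rfl⟩)
  · exact Or.inr (Or.inl ⟨s, a, b, hq, crossH_crossH.symm⟩)
  · obtain ⟨rfl, rfl, rfl⟩ := hp.unique h
    exact Or.inl rfl
  · obtain ⟨rfl, rfl, rfl⟩ := hp.unique_onHorizSide h
    have hc : p ∈ holeCorners s a b := mem_holeCorners_iff.2 ⟨hp, h⟩
    exact Or.inr (Or.inr (Or.inr ⟨s, a, b, crossH_mem_holeCorners hc, by rw [crossH_crossH]⟩))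
  · obtain ⟨rfl, rfl, rfl⟩ := hp.unique (mem_holeCorners_iff.1 h).1
    have hc := mem_holeCorners_iff.1 (crossH_mem_holeCorners (t := t) h)
    exact Or.inr (Or.inr (Or.inl ⟨s, a, b, hc.2, rfl⟩))

lemma crossings_subset_crossings_crossV (hp : OnHorizSide s a b p) :
    crossings t p ⊆ crossings t (crossV t s a b p) := by
  have hq : OnHorizSide s a b (crossV t s a b p) := hp.crossV
  rintro r (rfl | ⟨s', a', b', h, rfl⟩ | ⟨s', a', b', h, rfl⟩ | ⟨s', a', b', h, rfl⟩)
  · exact Or.inr (Or.inr (Or.inl ⟨s, a, b, hq, crossV_crossV.symm⟩))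
  · obtain ⟨rfl, rfl, rfl⟩ := h.unique_onHorizSide hp
    have hc : p ∈ holeCorners s' a' b' := mem_holeCorners_iff.2 ⟨h, hp⟩
    refine Or.inr (Or.inr (Or.inr ⟨s', a', b', crossV_mem_holeCorners hc, ?_⟩))
    rw [← crossH_crossV, crossV_crossV]
  · obtain ⟨rfl, rfl, rfl⟩ := hp.unique h
    exact Or.inl rfl
  · obtain ⟨rfl, rfl, rfl⟩ := hp.unique (mem_holeCorners_iff.1 h).2
    have hc := mem_holeCorners_iff.1 (crossV_mem_holeCorners (t := t) h)
    exact Or.inr (Or.inl ⟨s, a, b, hc.1, crossH_crossV.symm⟩)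

lemma exists_cross_of_ptGlue (h : PtGlue (uniform t) p q) : ∃ s a b,
    (OnVertSide s a b p ∧ q = crossH t s a b p) ∨ (OnHorizSide s a b p ∧ q = crossV t s a b p) := by
  obtain ⟨s, a, b, -, ⟨h₁, h₂, h₃, h₄, h₅⟩ | ⟨h₁, h₂, h₃, h₄, h₅⟩⟩ := h <;>
    refine ⟨s, a, b, ?_⟩ <;> simp only [pow_succ, uniform] at h₁ h₂ h₃ h₄ h₅
  · refine Or.inl ⟨⟨mem_midEnds.2 (Or.inl (by linarith)), by constructor <;> linarith⟩,
      Prod.ext (by simp only [crossH, midReflect]; linarith) ?_⟩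
    simp only [crossH, midReflect, h₅]
    split_ifs <;> ring
  · refine Or.inr ⟨⟨by constructor <;> linarith, mem_midEnds.2 (Or.inl (by linarith))⟩,
      Prod.ext ?_ (by simp only [crossV, midReflect]; linarith)⟩
    simp only [crossV, midReflect, h₅]
    split_ifs <;> ring

lemma crossings_eq_of_ptGlue (h : PtGlue (uniform t) p q) : crossings t p = crossings t q := by
  obtain ⟨s, a, b, ⟨hp, rfl⟩ | ⟨hp, rfl⟩⟩ := exists_cross_of_ptGlue h
  · refine (crossings_subset_crossings_crossH hp).antisymm ?_
    simpa only [crossH_crossH] using crossings_subset_crossings_crossH (t := t) (hp.crossH (t := t))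
  · refine (crossings_subset_crossings_crossV hp).antisymm ?_
    simpa only [crossV_crossV] using crossings_subset_crossings_crossV (t := t) (hp.crossV (t := t))

lemma mem_crossings_of_ptEquiv (h : PtEquiv (uniform t) p q) : q ∈ crossings t p := by
  have hpq : crossings t p = crossings t q := by
    induction h with
    | rel x y hxy => exact hxy.elim crossings_eq_of_ptGlue fun h => (crossings_eq_of_ptGlue h).symm
    | refl x => rfl
    | symm x y _ ih => exact ih.symm
    | trans x y z _ _ ih₁ ih₂ => exact ih₁.trans ih₂
  exact hpq ▸ Or.inl rfl

lemma crossings_subset_holeCorners (hp : p ∈ holeCorners s a b) :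
    crossings t p ⊆ holeCorners s a b := by
  have ⟨hH, hV⟩ := mem_holeCorners_iff.1 hp
  rintro r (rfl | ⟨s', a', b', h, rfl⟩ | ⟨s', a', b', h, rfl⟩ | ⟨s', a', b', h, rfl⟩)
  · exact hp
  · obtain ⟨rfl, rfl, rfl⟩ := hH.unique h
    exact crossH_mem_holeCorners hp
  · obtain ⟨rfl, rfl, rfl⟩ := hV.unique h
    exact crossV_mem_holeCorners hp
  · obtain ⟨rfl, rfl, rfl⟩ := hH.unique (mem_holeCorners_iff.1 h).1
    exact crossV_mem_holeCorners (crossH_mem_holeCorners hp)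

lemma exists_crossings_subset_pair (hp : ∀ s a b, p ∉ holeCorners s a b) :
    ∃ p', crossings t p ⊆ ↑({p, p'} : Finset (ℤ × ℤ)) := by
  have hHV : ∀ {s a b s' a' b'}, OnVertSide s a b p → ¬OnHorizSide s' a' b' p := by
    intro s a b s' a' b' hH hV
    obtain ⟨rfl, rfl, rfl⟩ := hH.unique_onHorizSide hV
    exact hp _ _ _ (mem_holeCorners_iff.2 ⟨hH, hV⟩)
  by_cases hH : ∃ s a b, OnVertSide s a b p
  · obtain ⟨s, a, b, hH⟩ := hH
    refine ⟨crossH t s a b p, ?_⟩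
    rintro r (rfl | ⟨s', a', b', h, rfl⟩ | ⟨s', a', b', h, rfl⟩ | ⟨s', a', b', h, rfl⟩)
    · simp
    · obtain ⟨rfl, rfl, rfl⟩ := hH.unique h
      simp
    · exact absurd h (hHV hH)
    · exact absurd h (hp _ _ _)
  by_cases hV : ∃ s a b, OnHorizSide s a b p
  · obtain ⟨s, a, b, hV⟩ := hV
    refine ⟨crossV t s a b p, ?_⟩
    rintro r (rfl | ⟨s', a', b', h, rfl⟩ | ⟨s', a', b', h, rfl⟩ | ⟨s', a', b', h, rfl⟩)
    · simp
    · exact absurd ⟨s', a', b', h⟩ hH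
    · obtain ⟨rfl, rfl, rfl⟩ := hV.unique h
      simp
    · exact absurd h (hp _ _ _)
  refine ⟨p, ?_⟩
  rintro r (rfl | ⟨s', a', b', h, rfl⟩ | ⟨s', a', b', h, rfl⟩ | ⟨s', a', b', h, rfl⟩)
  · simp
  · exact absurd ⟨s', a', b', h⟩ hH
  · exact absurd ⟨s', a', b', h⟩ hV
  · exact absurd h (hp _ _ _)

end Crossings

section Blocks

variable {m s : ℕ} {a b x X : ℤ} {q D : ℤ × ℤ}

def intervalsAt (m : ℕ) (x : ℤ) : Finset ℤ := {x / 3 ^ m, x / 3 ^ m - 1}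

def cornerBlocks (m : ℕ) (q : ℤ × ℤ) : Finset (ℤ × ℤ) := intervalsAt m q.1 ×ˢ intervalsAt m q.2

open Classical in
noncomputable def cornerCopies (m : ℕ) (q : ℤ × ℤ) : Finset (ℤ × ℤ) := {D ∈ cornerBlocks m q | IsCell D}

lemma mem_intervalsAt (h : x = X * 3 ^ m ∨ x = (X + 1) * 3 ^ m) : X ∈ intervalsAt m x := by
  have h3 : (3 : ℤ) ^ m ≠ 0 := by positivity
  rcases h with rfl | rfl <;> simp [intervalsAt, Int.mul_ediv_cancel _ h3]

lemma mem_cornerBlocks (h : IsCornerPt m D q) : D ∈ cornerBlocks m q :=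
  mem_product.2 ⟨mem_intervalsAt h.1, mem_intervalsAt h.2⟩

lemma card_cornerBlocks_le : (cornerBlocks m q).card ≤ 4 :=
  card_pair_product_pair_le

/-- At an end `x` of a middle third of level `s ≥ m`, one of the two adjacent intervals of
length `3^m` lies in the middle third, so its index has the digit `1` in position `s - m`. -/
lemma exists_mem_intervalsAt_dig_eq_one (hms : m ≤ s) (hx : x ∈ midEnds s a) :
    ∃ X ∈ intervalsAt m x, dig (s - m) X = 1 := by
  obtain ⟨j, rfl⟩ := Nat.exists_eq_add_of_le' hms
  have hpos : (0 : ℤ) < 3 ^ j := by positivity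
  rw [Nat.add_sub_cancel]
  rcases mem_midEnds.1 hx with rfl | rfl
  · refine ⟨(3 * a + 1) * 3 ^ j, mem_intervalsAt (Or.inl (by ring)), ?_⟩
    change (3 * a + 1) * 3 ^ j / 3 ^ j % 3 = 1
    rw [Int.mul_ediv_cancel _ hpos.ne']
    omega
  · refine ⟨(3 * a + 2) * 3 ^ j - 1, mem_intervalsAt (Or.inr (by ring)), ?_⟩
    change ((3 * a + 2) * 3 ^ j - 1) / 3 ^ j % 3 = 1
    rw [show (3 * a + 2) * 3 ^ j - 1 = 3 ^ j - 1 + (3 * a + 1) * 3 ^ j by ring,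
      Int.add_mul_ediv_right _ _ hpos.ne', Int.ediv_eq_zero_of_lt (by omega) (by omega)]
    omega

lemma card_cornerCopies_le : (cornerCopies m q).card ≤ 4 := by
  classical
  exact (card_filter_le _ _).trans card_cornerBlocks_le

lemma card_cornerCopies_le_three (hms : m ≤ s) (hq : q ∈ holeCorners s a b) :
    (cornerCopies m q).card ≤ 3 := by
  classical
  obtain ⟨hx, hy⟩ := mem_product.1 hq
  obtain ⟨X, hX, hXdig⟩ := exists_mem_intervalsAt_dig_eq_one hms hx
  obtain ⟨Y, hY, hYdig⟩ := exists_mem_intervalsAt_dig_eq_one hms hy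
  have hlt : (cornerCopies m q).card < (cornerBlocks m q).card :=
    card_lt_card (filter_ssubset.2 ⟨(X, Y), mem_product.2 ⟨hX, hY⟩,
      fun hcell => hcell (s - m) ⟨hXdig, hYdig⟩⟩)
  have := card_cornerBlocks_le (m := m) (q := q)
  omega

lemma mem_cornerCopies (hD : IsCell D) (h : IsCornerPt m D q) : D ∈ cornerCopies m q := by
  classical
  exact mem_filter.2 ⟨mem_cornerBlocks h, hD⟩

end Blocks

lemma exists_finset_copies_sharing_corner (t : IdentType) (m : ℕ) {p : ℤ × ℤ}
    (hp : (3 : ℤ) ^ m ∣ p.1) : ∃ F : Finset (ℤ × ℤ), F.card ≤ 12 ∧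
      ∀ D q, IsCell D → IsCornerPt m D q → PtEquiv (uniform t) p q → D ∈ F := by
  suffices ∃ P : Finset (ℤ × ℤ), crossings t p ⊆ P ∧ (P.biUnion (cornerCopies m)).card ≤ 12 by
    obtain ⟨P, hP, hcard⟩ := this
    exact ⟨_, hcard, fun D q hD hDq hpq =>
      mem_biUnion.2 ⟨q, hP (mem_crossings_of_ptEquiv hpq), mem_cornerCopies hD hDq⟩⟩
  by_cases hcorner : ∃ s a b, p ∈ holeCorners s a b
  · obtain ⟨s, a, b, hpc⟩ := hcorner
    have hms : m ≤ s := le_of_mem_midEnds_of_dvd (mem_product.1 hpc).1 hp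
    refine ⟨holeCorners s a b, crossings_subset_holeCorners hpc, ?_⟩
    calc _ ≤ (holeCorners s a b).card * 3 :=
          card_biUnion_le_card_mul _ _ _ fun q hq => card_cornerCopies_le_three hms hq
      _ ≤ 12 := by linarith [card_holeCorners_le (s := s) (a := a) (b := b)]
  · push Not at hcorner
    obtain ⟨p', hp'⟩ := exists_crossings_subset_pair (t := t) hcorner
    refine ⟨{p, p'}, hp', ?_⟩
    calc _ ≤ ({p, p'} : Finset (ℤ × ℤ)).card * 4 :=
          card_biUnion_le_card_mul _ _ _ fun q _ => card_cornerCopies_le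
      _ ≤ 12 := by linarith [card_le_two (a := p) (b := p')]

def cornerPts (m : ℕ) (C : ℤ × ℤ) : Finset (ℤ × ℤ) :=
  {C.1 * 3 ^ m, (C.1 + 1) * 3 ^ m} ×ˢ {C.2 * 3 ^ m, (C.2 + 1) * 3 ^ m}

lemma mem_cornerPts {m : ℕ} {C p : ℤ × ℤ} : p ∈ cornerPts m C ↔ IsCornerPt m C p := by
  simp [cornerPts, IsCornerPt]

lemma card_cornerPts_le (m : ℕ) (C : ℤ × ℤ) : (cornerPts m C).card ≤ 4 :=
  card_pair_product_pair_le

lemma dvd_fst_of_mem_cornerPts {m : ℕ} {C p : ℤ × ℤ} (h : p ∈ cornerPts m C) :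
    (3 : ℤ) ^ m ∣ p.1 := by
  rcases (mem_cornerPts.1 h).1 with h | h <;> exact h ▸ dvd_mul_left _ _

/-- For any identification type and any cell `z`, the set `𝒱` of copies of
`V_m` sharing a corner vertex with the copy containing `z` has at most 45 elements. -/
theorem corner_sharing_copies_card (t : IdentType) (m : ℕ) (z : Cell) :
    { D : ℤ × ℤ | IsCopy D ∧ SharesCornerVertex (uniform t) m (copyOf m z) D }.ncard
      ≤ 45 := by
  set C := copyOf m z
  choose F hFcard hF using fun p : cornerPts m C =>
    exists_finset_copies_sharing_corner t m (dvd_fst_of_mem_cornerPts p.2)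
  have hCF : ∀ p, C ∈ F p := fun p =>
    hF p C p (isCell_copyOf m z) (mem_cornerPts.1 p.2) (Relation.EqvGen.refl _)
  have hsub : { D | IsCopy D ∧ SharesCornerVertex (uniform t) m C D } ⊆ ↑(univ.biUnion F) := by
    rintro D ⟨hD, p, q, hp, hq, hpq⟩
    exact mem_biUnion.2 ⟨⟨p, mem_cornerPts.2 hp⟩, mem_univ _, hF _ D q hD hq hpq⟩
  calc _ ≤ (univ.biUnion F).card := (Set.ncard_le_ncard hsub (finite_toSet _)).trans_eq
        (Set.ncard_coe_finset _)
    _ ≤ (univ : Finset (cornerPts m C)).card * 11 + 1 :=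
        card_biUnion_le_of_common_mem _ _ (fun p _ => hCF p) (fun p _ => hFcard p)
    _ ≤ 45 := by
        rw [card_univ, Fintype.card_coe]
        linarith [card_cornerPts_le m C]

end MagicCarpet
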